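/- Let G be a finite graph with simple random walk transition matrix M and let B be a real matrix indexed by the vertices of G with |B_{u,v}| \le c_1 M_{u,v} for all u,v and (B M^k)_{v,v} = 0 for all k \ge 0 and all vertices v. For a power series f(z) = \sum_j a_j z^j with radius of convergence greater than 1, define T_G(f) = |G|^{-1/2} \sum_{j \ge 2} a_j (j/2) \sum_{k_1+k_2+2=j,\, k_1,k_2\ge 0} Tr(B M^{k_1} B M^{k_2}). Then this series converges absolutely and |T_G(f)| \le c_1^2 |G|^{1/2} \|f\|_*, where \|f\|_* = \sum_{k \ge 1} k^2 |a_k|. -/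

import Mathlib

/-!
Every entry of `B M^k` is bounded by `c₁` times the corresponding entry of `M^(k+1)`, and powers
of the walk matrix are substochastic, so each diagonal entry of `B M^{k₁} B M^{k₂}` is at most
`c₁²` in absolute value and each trace at most `c₁² |G|`. There are `j - 1` pairs with
`k₁ + k₂ + 2 = j`, so the `j`-th term of `T_G(f)` is at most `c₁² |G| j² |a_j|`; the weights
`j²` are summable against `|a_j|` because `∑ |a_j| r^j < ∞` for some `r > 1`.
-/

open Matrix Finset

namespace Matrix

section SubStochastic

/-- Not `rowStochastic`: the walk matrix of a graph has a zero row at each isolated vertex. -/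
def subStochastic (R n : Type*) [Fintype n] [DecidableEq n] [Semiring R] [PartialOrder R]
    [IsOrderedRing R] : Submonoid (Matrix n n R) where
  carrier := {M | (∀ i j, 0 ≤ M i j) ∧ ∀ i, ∑ j, M i j ≤ 1}
  mul_mem' {M N} hM hN := by
    refine ⟨fun i j => sum_nonneg fun k _ => mul_nonneg (hM.1 _ _) (hN.1 _ _), fun i => ?_⟩
    calc ∑ j, (M * N) i j = ∑ k, M i k * ∑ j, N k j := by
          simp only [mul_apply, mul_sum]; exact sum_comm
      _ ≤ ∑ k, M i k := sum_le_sum fun k _ => mul_le_of_le_one_right (hM.1 i k) (hN.2 k)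
      _ ≤ 1 := hM.2 i
  one_mem' := ⟨fun i j => by by_cases h : i = j <;> simp [one_apply, h],
    fun i => by simp [one_apply]⟩

variable {R n : Type*} [Fintype n] [DecidableEq n] [Semiring R] [PartialOrder R]
  [IsOrderedRing R] {M : Matrix n n R}

lemma nonneg_of_mem_subStochastic (hM : M ∈ subStochastic R n) (i j : n) : 0 ≤ M i j :=
  hM.1 i j

lemma le_one_of_mem_subStochastic (hM : M ∈ subStochastic R n) (i j : n) : M i j ≤ 1 :=
  (single_le_sum (fun k _ => hM.1 i k) (mem_univ j)).trans (hM.2 i)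

lemma trace_le_card_of_mem_subStochastic (hM : M ∈ subStochastic R n) :
    M.trace ≤ Fintype.card n := by
  simpa [trace] using sum_le_sum fun i (_ : i ∈ univ) => le_one_of_mem_subStochastic hM i i

end SubStochastic

end Matrix

namespace SimpleGraph

variable {V : Type*} [Fintype V] (G : SimpleGraph V) [DecidableRel G.Adj]

noncomputable def walkMatrix : Matrix V V ℝ :=
  Matrix.of fun u v => if G.Adj u v then 1 / (G.degree u : ℝ) else 0

lemma sum_walkMatrix_apply_le_one (u : V) : ∑ v, G.walkMatrix u v ≤ 1 := by
  have hsum : ∑ v, G.walkMatrix u v = G.degree u * (1 / (G.degree u : ℝ)) := by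
    simp [walkMatrix, ← sum_filter, ← neighborFinset_eq_filter, card_neighborFinset_eq_degree]
  rw [hsum, mul_one_div]
  exact div_self_le_one _

variable [DecidableEq V]

lemma walkMatrix_mem_subStochastic : G.walkMatrix ∈ Matrix.subStochastic ℝ V :=
  ⟨fun u v => by rw [walkMatrix, of_apply]; split_ifs <;> positivity,
    G.sum_walkMatrix_apply_le_one⟩

end SimpleGraph

lemma card_filter_add_add_two_eq_le (j : ℕ) :
    #{p ∈ range j ×ˢ range j | p.1 + p.2 + 2 = j} ≤ j := by
  simpa using card_le_card_of_injOn Prod.fst (t := range j)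
    (fun p hp => by
      simp only [coe_filter, mem_product, Set.mem_ofPred_eq] at hp
      simpa using hp.1.1)
    (fun p hp q hq hpq => by
      simp only [coe_filter, Set.mem_ofPred_eq] at hp hq
      exact Prod.ext hpq (by omega))

namespace Matrix

section EntrywiseBounds

variable {R l m n : Type*} [CommRing R] [LinearOrder R] [IsStrictOrderedRing R]

lemma abs_mul_apply_le [Fintype m] {X P : Matrix l m R} {Y Q : Matrix m n R}
    (hX : ∀ i j, |X i j| ≤ P i j) (hY : ∀ i j, |Y i j| ≤ Q i j) (i : l) (k : n) :
    |(X * Y) i k| ≤ (P * Q) i k := by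
  rw [mul_apply, mul_apply]
  refine (abs_sum_le_sum_abs _ _).trans (sum_le_sum fun j _ => ?_)
  rw [abs_mul]
  exact mul_le_mul (hX i j) (hY j k) (abs_nonneg _) ((abs_nonneg _).trans (hX i j))

lemma abs_trace_le_of_abs_le [Fintype n] {X P : Matrix n n R} (hX : ∀ i j, |X i j| ≤ P i j) :
    |X.trace| ≤ P.trace :=
  (abs_sum_le_sum_abs _ _).trans (sum_le_sum fun i _ => hX i i)

variable [Fintype n] [DecidableEq n] {M B : Matrix n n R} {c : R}

lemma abs_trace_mul_pow_mul_mul_pow_le (hM : M ∈ subStochastic R n)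
    (hB : ∀ i j, |B i j| ≤ c * M i j) (k₁ k₂ : ℕ) :
    |(B * M ^ k₁ * B * M ^ k₂).trace| ≤ c ^ 2 * Fintype.card n := by
  have hPow : ∀ k i j, |(M ^ k) i j| ≤ (M ^ k) i j := fun k i j =>
    (abs_of_nonneg (nonneg_of_mem_subStochastic (pow_mem hM k) i j)).le
  have hBPow : ∀ k i j, |(B * M ^ k) i j| ≤ (c • M ^ (k + 1)) i j := fun k i j => by
    simpa [pow_succ'] using abs_mul_apply_le (P := c • M) hB (hPow k) i j
  calc |(B * M ^ k₁ * B * M ^ k₂).trace|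
      ≤ (c • M ^ (k₁ + 1) * c • M ^ (k₂ + 1)).trace := by
        rw [mul_assoc (B * M ^ k₁)]
        exact abs_trace_le_of_abs_le (abs_mul_apply_le (hBPow k₁) (hBPow k₂))
    _ = c ^ 2 * (M ^ (k₁ + 1 + (k₂ + 1))).trace := by
        rw [smul_mul_smul_comm, ← pow_add, trace_smul, smul_eq_mul, sq]
    _ ≤ c ^ 2 * Fintype.card n :=
        mul_le_mul_of_nonneg_left (trace_le_card_of_mem_subStochastic (pow_mem hM _))
          (sq_nonneg c)

lemma abs_sum_trace_mul_pow_mul_mul_pow_le (hM : M ∈ subStochastic R n)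
    (hB : ∀ i j, |B i j| ≤ c * M i j) (j : ℕ) :
    |∑ p ∈ range j ×ˢ range j with p.1 + p.2 + 2 = j, (B * M ^ p.1 * B * M ^ p.2).trace| ≤
      j * (c ^ 2 * Fintype.card n) := by
  refine (abs_sum_le_sum_abs _ _).trans ?_
  refine (sum_le_card_nsmul _ _ _ fun p _ =>
    abs_trace_mul_pow_mul_mul_pow_le hM hB p.1 p.2).trans ?_
  rw [nsmul_eq_mul]
  gcongr
  exact_mod_cast card_filter_add_add_two_eq_le j

end EntrywiseBounds

end Matrix

lemma summable_pow_mul_norm_of_summable_norm_mul_pow {E : Type*} [SeminormedAddCommGroup E]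
    {a : ℕ → E} {r : ℝ} (hr : 1 < r) (ha : Summable fun k : ℕ => ‖a k‖ * r ^ k)
    (m : ℕ) :
    Summable fun k : ℕ => (k : ℝ) ^ m * ‖a k‖ := by
  have hr₀ : 0 < r := one_pos.trans hr
  have hr' : ‖r⁻¹‖ < 1 := by
    rw [Real.norm_of_nonneg (inv_nonneg.2 hr₀.le)]; exact inv_lt_one_of_one_lt₀ hr
  have hgeom : Filter.Tendsto (fun k : ℕ => (k : ℝ) ^ m * r⁻¹ ^ k) Filter.atTop (nhds 0) :=
    (summable_pow_mul_geometric_of_norm_lt_one m hr').tendsto_atTop_zero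
  have hfactor : (fun k : ℕ => (k : ℝ) ^ m * ‖a k‖) =
      fun k : ℕ => ((k : ℝ) ^ m * r⁻¹ ^ k) * (‖a k‖ * r ^ k) := by
    ext k
    rw [mul_mul_mul_comm, ← mul_pow, inv_mul_cancel₀ hr₀.ne', one_pow, mul_one]
  refine summable_of_isBigO ha ?_
  rw [hfactor, Nat.cofinite_eq_atTop]
  simpa using
    (hgeom.isBigO_one ℝ).mul (Asymptotics.isBigO_refl (fun k : ℕ => ‖a k‖ * r ^ k) _)

lemma norm_mul_half_mul_ofReal_le {z : ℂ} {S C : ℝ} {j : ℕ} (hC : 0 ≤ C)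
    (hS : |S| ≤ j * C) :
    ‖z * ((j : ℂ) / 2) * (S : ℂ)‖ ≤ C * ((j : ℝ) ^ 2 * ‖z‖) := by
  rw [norm_mul, norm_mul, Complex.norm_real, Real.norm_eq_abs, norm_div, Complex.norm_natCast,
    Complex.norm_two]
  have hbound_nonneg : 0 ≤ C * ((j : ℝ) ^ 2 * ‖z‖) := by positivity
  calc ‖z‖ * (j / 2) * |S| ≤ ‖z‖ * (j / 2) * (j * C) := by gcongr
    _ ≤ C * ((j : ℝ) ^ 2 * ‖z‖) := by linarith

theorem T_G_abs_convergent_and_bounded_general {V : Type*} [Fintype V] [DecidableEq V]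
    (G : SimpleGraph V) [DecidableRel G.Adj]
    (M B : Matrix V V ℝ)
    (hM : ∀ u v : V, M u v = if G.Adj u v then (1 : ℝ) / (G.degree u) else 0)
    (c₁ : ℝ)
    (hBbound : ∀ u v, |B u v| ≤ c₁ * M u v)
    (a : ℕ → ℂ)
    (hf : ∃ r : ℝ, 1 < r ∧ Summable fun k => ‖a k‖ * r ^ k) :
    Summable (fun j : ℕ =>
      ‖(a j * ((j : ℂ) / 2) *
        (∑ p ∈ (Finset.range j ×ˢ Finset.range j).filter (fun p => p.1 + p.2 + 2 = j),
          (B * M ^ p.1 * B * M ^ p.2).trace : ℝ))‖) ∧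
    ‖(((Real.sqrt (Fintype.card V))⁻¹ : ℝ) *
        ∑' j : ℕ, a j * ((j : ℂ) / 2) *
          (∑ p ∈ (Finset.range j ×ˢ Finset.range j).filter (fun p => p.1 + p.2 + 2 = j),
            (B * M ^ p.1 * B * M ^ p.2).trace : ℝ))‖ ≤
      c₁ ^ 2 * Real.sqrt (Fintype.card V) *
        (∑' k : ℕ, (k : ℝ) ^ 2 * ‖a k‖) := by
  obtain ⟨r, hr, ha⟩ := hf
  obtain rfl : M = G.walkMatrix := Matrix.ext hM
  have hg := summable_pow_mul_norm_of_summable_norm_mul_pow hr ha 2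
  have hterm := fun j => norm_mul_half_mul_ofReal_le (z := a j) (by positivity)
    (abs_sum_trace_mul_pow_mul_mul_pow_le G.walkMatrix_mem_subStochastic hBbound j)
  refine ⟨.of_nonneg_of_le (fun j => norm_nonneg _) hterm (hg.mul_left _), ?_⟩
  have hsqrt : (√(Fintype.card V : ℝ))⁻¹ * Fintype.card V = √(Fintype.card V : ℝ) := by
    rw [inv_mul_eq_div, Real.div_sqrt]
  rw [norm_mul, Complex.norm_real, norm_inv, Real.norm_of_nonneg (Real.sqrt_nonneg _)]
  refine (mul_le_mul_of_nonneg_left (tsum_of_norm_bounded (hg.hasSum.mul_left _) hterm)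
    (by positivity)).trans (le_of_eq ?_)
  linear_combination (c₁ ^ 2 * ∑' k : ℕ, (k : ℝ) ^ 2 * ‖a k‖) * hsqrt

/-- For a finite graph `G` with walk matrix `M` and a matrix `B` with
`|B_{u,v}| ≤ c₁ M_{u,v}` and vanishing diagonal entries of `B M^k`, the series defining
`T_G(f) = |G|^{-1/2} ∑_j a_j (j/2) ∑_{k₁+k₂+2=j} Tr(B M^{k₁} B M^{k₂})` converges
absolutely, and `|T_G(f)| ≤ c₁² |G|^{1/2} ‖f‖_*`. -/
theorem T_G_abs_convergent_and_bounded {V : Type*} [Fintype V] [DecidableEq V]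
    (G : SimpleGraph V) [DecidableRel G.Adj]
    (M B : Matrix V V ℝ)
    (hM : ∀ u v : V, M u v = if G.Adj u v then (1 : ℝ) / (G.degree u) else 0)
    (c₁ : ℝ) (hc₁ : 0 < c₁)
    (hBbound : ∀ u v, |B u v| ≤ c₁ * M u v)
    (hBM : ∀ (k : ℕ) (v : V), (B * M ^ k) v v = 0)
    (a : ℕ → ℂ)
    (hf : ∃ r : ℝ, 1 < r ∧ Summable fun k => ‖a k‖ * r ^ k) :
    Summable (fun j : ℕ =>
      ‖(a j * ((j : ℂ) / 2) *
        (∑ p ∈ (Finset.range j ×ˢ Finset.range j).filter (fun p => p.1 + p.2 + 2 = j),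
          (B * M ^ p.1 * B * M ^ p.2).trace : ℝ))‖) ∧
    ‖(((Real.sqrt (Fintype.card V))⁻¹ : ℝ) *
        ∑' j : ℕ, a j * ((j : ℂ) / 2) *
          (∑ p ∈ (Finset.range j ×ˢ Finset.range j).filter (fun p => p.1 + p.2 + 2 = j),
            (B * M ^ p.1 * B * M ^ p.2).trace : ℝ))‖ ≤
      c₁ ^ 2 * Real.sqrt (Fintype.card V) *
        (∑' k : ℕ, (k : ℝ) ^ 2 * ‖a k‖) :=
  T_G_abs_convergent_and_bounded_general G M B hM c₁ hBbound a hf
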